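/- Let f_{θ_0'}(θ) := (1 - cos θ)(1 - cos(θ - θ_0')) for a fixed θ_0' ∈ (0, 2π) with θ_0' ≠ π. Then the unique global maximum of f_{θ_0'} on [0, 2π) occurs at θ_1 = θ_0'/2 + π when θ_0' ∈ (0, π), and at θ_1 = θ_0'/2 when θ_0' ∈ (π, 2π). -/
import Mathlib


open Real

lemma key_id (u a : ℝ) :
    (1 - Real.cos (u + a)) * (1 - Real.cos (u - a)) = (Real.cos a - Real.cos u) ^ 2 := by
  rw [Real.cos_add, Real.cos_sub]
  linear_combination (-(Real.sin u ^ 2)) * Real.sin_sq_add_cos_sq a +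
    (Real.cos a ^ 2 - 1) * Real.sin_sq_add_cos_sq u

/-- For `θ₀' ∈ (0, 2π)` with `θ₀' ≠ π`, the function
`f(θ) = (1 - cos θ)(1 - cos(θ - θ₀'))` has a unique global maximum on `[0, 2π)`,
attained at `θ₁ = θ₀'/2 + π` if `θ₀' ∈ (0, π)` and at `θ₁ = θ₀'/2` if `θ₀' ∈ (π, 2π)`. -/
theorem stmt7 (θ₀' : ℝ) (h1 : 0 < θ₀') (h2 : θ₀' < 2 * Real.pi) (h3 : θ₀' ≠ Real.pi) :
    ∀ θ ∈ Set.Ico (0 : ℝ) (2 * Real.pi),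
      θ ≠ (if θ₀' < Real.pi then θ₀' / 2 + Real.pi else θ₀' / 2) →
      (1 - Real.cos θ) * (1 - Real.cos (θ - θ₀')) <
        (1 - Real.cos (if θ₀' < Real.pi then θ₀' / 2 + Real.pi else θ₀' / 2)) *
          (1 - Real.cos ((if θ₀' < Real.pi then θ₀' / 2 + Real.pi else θ₀' / 2) - θ₀')) := by
  intro θ hθ hne
  obtain ⟨hθ0, hθ2⟩ := hθ
  have hpi := Real.pi_pos
  have hL : (1 - Real.cos θ) * (1 - Real.cos (θ - θ₀')) =
      (Real.cos (θ₀' / 2) - Real.cos (θ - θ₀' / 2)) ^ 2 := by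
    have := key_id (θ - θ₀' / 2) (θ₀' / 2)
    rw [show θ - θ₀' / 2 + θ₀' / 2 = θ by ring, show θ - θ₀' / 2 - θ₀' / 2 = θ - θ₀' by ring]
      at this
    exact this
  have ht1 : Real.cos (θ - θ₀' / 2) ≤ 1 := Real.cos_le_one _
  have ht2 : -1 ≤ Real.cos (θ - θ₀' / 2) := Real.neg_one_le_cos _
  by_cases hlt : θ₀' < Real.pi
  · simp only [if_pos hlt] at hne ⊢
    rw [hL]
    have hR : (1 - Real.cos (θ₀' / 2 + Real.pi)) * (1 - Real.cos (θ₀' / 2 + Real.pi - θ₀')) =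
        (Real.cos (θ₀' / 2) - Real.cos Real.pi) ^ 2 := by
      have := key_id Real.pi (θ₀' / 2)
      rw [show Real.pi + θ₀' / 2 = θ₀' / 2 + Real.pi by ring,
        show Real.pi - θ₀' / 2 = θ₀' / 2 + Real.pi - θ₀' by ring] at this
      exact this
    rw [hR, Real.cos_pi]
    have hA : 0 < Real.cos (θ₀' / 2) :=
      Real.cos_pos_of_mem_Ioo ⟨by linarith, by linarith⟩
    have hne' : Real.cos (θ - θ₀' / 2) ≠ -1 := by
      intro hc
      have : Real.cos (θ - θ₀' / 2 - Real.pi) = 1 := by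
        rw [Real.cos_sub, Real.cos_pi, Real.sin_pi]; linarith [hc]
      have h0 : θ - θ₀' / 2 - Real.pi = 0 :=
        (Real.cos_eq_one_iff_of_lt_of_lt (by linarith) (by linarith)).mp this
      exact hne (by linarith)
    have ht2' : -1 < Real.cos (θ - θ₀' / 2) := lt_of_le_of_ne ht2 (Ne.symm hne')
    nlinarith [hA, ht1, ht2']
  · have hgt : Real.pi < θ₀' := lt_of_le_of_ne (not_lt.mp hlt) (Ne.symm h3)
    simp only [if_neg hlt] at hne ⊢
    rw [hL]
    have hR : (1 - Real.cos (θ₀' / 2)) * (1 - Real.cos (θ₀' / 2 - θ₀')) =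
        (Real.cos (θ₀' / 2) - Real.cos 0) ^ 2 := by
      have := key_id 0 (θ₀' / 2)
      rw [show (0 : ℝ) + θ₀' / 2 = θ₀' / 2 by ring,
        show (0 : ℝ) - θ₀' / 2 = θ₀' / 2 - θ₀' by ring] at this
      exact this
    rw [hR, Real.cos_zero]
    have hA : Real.cos (θ₀' / 2) < 0 :=
      Real.cos_neg_of_pi_div_two_lt_of_lt (by linarith) (by linarith)
    have hne' : Real.cos (θ - θ₀' / 2) ≠ 1 := by
      intro hc
      have h0 : θ - θ₀' / 2 = 0 :=
        (Real.cos_eq_one_iff_of_lt_of_lt (by linarith) (by linarith)).mp hc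
      exact hne (by linarith)
    have ht1' : Real.cos (θ - θ₀' / 2) < 1 := lt_of_le_of_ne ht1 hne'
    nlinarith [hA, ht1', ht2]
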